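/- For every d̄ ≥ 1 there exists ε₀ ∈ (0,1) such that for every ε ∈ (0,ε₀] and every δ ∈ (0,1) there exists n₀ ∈ ℕ such that the following holds for every n ≥ n₀. Let D be a feasible degree sequence on V = [n] with Σ^D ≤ d̄n, set S₁ := {u ∈ V : d(u) ≥ (log n)²} and S₃ := {u ∈ V : d(u) ≥ n^{4/5}}, and assume Σ_{u∈S₁} d(u) ≥ εn and Σ_{u∈S₃} d(u) < εn/10. Then the probability that there exists a vertex u ∈ S₁ whose degree in the induced subgraph G^D[S₁] is at most min{d(u), n^{1/6}}·ε/(16d̄) is at most δ. -/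

import Mathlib

open Finset

noncomputable section
open scoped Classical

/-- The finset of all simple graphs on `Fin n` realising the degree sequence `D`
(vertex `v` has degree `D v`). -/
def graphsWithDegreeSeq (n : ℕ) (D : Fin n → ℕ) : Finset (SimpleGraph (Fin n)) :=
  Finset.univ.filter (fun G => ∀ v, G.degree v = D v)

/-- Probability of `A` under the uniform distribution on simple graphs with degree
sequence `D`. -/
def uniformProb (n : ℕ) (D : Fin n → ℕ) (A : SimpleGraph (Fin n) → Prop) : ℝ :=
  (((graphsWithDegreeSeq n D).filter A).card : ℝ) / ((graphsWithDegreeSeq n D).card : ℝ)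

/-!
Fix `u ∈ S₁` and let `B_j` be the set of graphs in which `u` has exactly `j` neighbours in `S₁`.
A switching trades edges `uw, xy` (with `w ∉ S₁`, `x ∈ S₁ \ S₃`) for `ux, wy`. From a graph in
`B_j` there are at least `(3/8)εn·d(u)` switchings: `u` has `≥ d(u)/2` neighbours outside `S₁`, the
vertices of `S₁ \ S₃` carry degree `≈ εn`, and codegrees are small since `S₃` is light and
`S₁` has few vertices. A graph in `B_{j+1}` arises from at most `(j+1)·d̄n` of them, so
`|B_j| ≤ |B_{j+1}|/2` as long as `j + 1 ≤ εd(u)/(8d̄)`. Hence the `k ≈ min{d(u), n^{1/6}}ε/(16d̄)`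
lowest classes together have probability at most `2^{1-L}`, where `L ≈ log₂(2n/δ)` further
steps fit below `εd(u)/(8d̄)` and below the `n^{1/6}` cap; a union bound over `u` gives `δ`.
-/

namespace SimpleGraph

variable {V : Type*} (G : SimpleGraph V) {u w x y : V}

def switch (u w x y : V) : SimpleGraph V :=
  fromEdgeSet ((G.edgeSet \ {s(u, w), s(x, y)}) ∪ {s(u, x), s(w, y)})

lemma switch_adj {a b : V} :
    (G.switch u w x y).Adj a b ↔
      ((G.Adj a b ∧ s(a, b) ≠ s(u, w) ∧ s(a, b) ≠ s(x, y)) ∨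
        s(a, b) = s(u, x) ∨ s(a, b) = s(w, y)) ∧ a ≠ b := by
  simp only [switch, fromEdgeSet_adj, Set.mem_union, Set.mem_sdiff, Set.mem_insert_iff,
    Set.mem_singleton_iff, mem_edgeSet, not_or]

lemma switch_comm_pairs : G.switch u w x y = G.switch x y u w := by
  rw [switch, switch, Set.pair_comm s(x, y), Sym2.eq_swap (a := x) (b := u),
    Sym2.eq_swap (a := y) (b := w)]

lemma switch_comm_ends : G.switch u w x y = G.switch w u y x := by
  rw [switch, switch, Sym2.eq_swap (a := w) (b := u), Sym2.eq_swap (a := y) (b := x),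
    Set.pair_comm s(w, y)]

lemma switch_adj_of_ne {a b : V} (hu : a ≠ u) (hw : a ≠ w) (hx : a ≠ x) (hy : a ≠ y) :
    (G.switch u w x y).Adj a b ↔ G.Adj a b := by
  rw [switch_adj]; aesop

structure IsSwitchable (u w x y : V) : Prop where
  adj_uw : G.Adj u w
  adj_xy : G.Adj x y
  not_adj_ux : ¬ G.Adj u x
  not_adj_wy : ¬ G.Adj w y
  ne_ux : u ≠ x
  ne_uy : u ≠ y
  ne_wx : w ≠ x
  ne_wy : w ≠ y

namespace IsSwitchable

variable {G}

lemma comm_pairs (h : G.IsSwitchable u w x y) : G.IsSwitchable x y u w :=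
  ⟨h.adj_xy, h.adj_uw, fun a => h.not_adj_ux a.symm, fun a => h.not_adj_wy a.symm,
    h.ne_ux.symm, h.ne_wx.symm, h.ne_uy.symm, h.ne_wy.symm⟩

lemma comm_ends (h : G.IsSwitchable u w x y) : G.IsSwitchable w u y x :=
  ⟨h.adj_uw.symm, h.adj_xy.symm, h.not_adj_wy, h.not_adj_ux, h.ne_wy, h.ne_wx, h.ne_uy, h.ne_ux⟩

variable [Fintype V] [DecidableEq V]

lemma neighborFinset_switch_u (h : G.IsSwitchable u w x y) :
    (G.switch u w x y).neighborFinset u = insert x ((G.neighborFinset u).erase w) := by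
  obtain ⟨huw, hxy, -, -, hux, huy, hwx, hwy⟩ := h
  have := huw.ne; have := hxy.ne
  ext b
  simp only [mem_neighborFinset, switch_adj, Finset.mem_insert, Finset.mem_erase]
  aesop

lemma neighborFinset_switch_x (h : G.IsSwitchable u w x y) :
    (G.switch u w x y).neighborFinset x = insert u ((G.neighborFinset x).erase y) := by
  rw [switch_comm_pairs]; exact h.comm_pairs.neighborFinset_switch_u

lemma neighborFinset_switch_w (h : G.IsSwitchable u w x y) :
    (G.switch u w x y).neighborFinset w = insert y ((G.neighborFinset w).erase u) := by
  rw [switch_comm_ends]; exact h.comm_ends.neighborFinset_switch_u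

lemma neighborFinset_switch_y (h : G.IsSwitchable u w x y) :
    (G.switch u w x y).neighborFinset y = insert w ((G.neighborFinset y).erase x) := by
  rw [switch_comm_ends, switch_comm_pairs]; exact h.comm_ends.comm_pairs.neighborFinset_switch_u

lemma switch (h : G.IsSwitchable u w x y) : (G.switch u w x y).IsSwitchable u x w y := by
  refine ⟨?_, ?_, ?_, ?_, h.adj_uw.ne, h.ne_uy, h.ne_wx.symm, h.adj_xy.ne⟩ <;>
    simp [← mem_neighborFinset, neighborFinset_switch_u h, neighborFinset_switch_w h,
      neighborFinset_switch_x h, h.ne_wx, h.ne_uy.symm]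

lemma degree_switch (h : G.IsSwitchable u w x y) (v : V) :
    (G.switch u w x y).degree v = G.degree v := by
  have card_eq {a b c : V} (hab : G.Adj a b) (hac : ¬ G.Adj a c) :
      #(insert c ((G.neighborFinset a).erase b)) = #(G.neighborFinset a) := by
    rw [Finset.card_insert_of_notMem (by simp [hac]), Finset.card_erase_add_one (by simpa)]
  simp only [← card_neighborFinset_eq_degree]
  by_cases hu : v = u
  · subst hu; rw [h.neighborFinset_switch_u, card_eq h.adj_uw h.not_adj_ux]
  by_cases hw : v = w
  · subst hw; rw [h.neighborFinset_switch_w, card_eq h.adj_uw.symm h.not_adj_wy]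
  by_cases hx : v = x
  · subst hx; rw [h.neighborFinset_switch_x, card_eq h.adj_xy (fun a => h.not_adj_ux a.symm)]
  by_cases hy : v = y
  · subst hy; rw [h.neighborFinset_switch_y, card_eq h.adj_xy.symm (fun a => h.not_adj_wy a.symm)]
  congr 1; ext b; simp [G.switch_adj_of_ne hu hw hx hy]

lemma switch_switch (h : G.IsSwitchable u w x y) : (G.switch u w x y).switch u x w y = G := by
  have h' := h.switch
  have restore {a b c : V} (hab : G.Adj a b) (hac : ¬ G.Adj a c) :
      (insert b ((insert c ((G.neighborFinset a).erase b)).erase c)) = G.neighborFinset a := by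
    rw [Finset.erase_insert (by simp [hac]), Finset.insert_erase (by simpa)]
  suffices hN : ∀ a, ((G.switch u w x y).switch u x w y).neighborFinset a = G.neighborFinset a by
    ext a b; rw [← mem_neighborFinset, ← mem_neighborFinset, hN]
  intro a
  by_cases hu : a = u
  · subst hu; rw [h'.neighborFinset_switch_u, h.neighborFinset_switch_u,
      restore h.adj_uw h.not_adj_ux]
  by_cases hx : a = x
  · subst hx; rw [h'.neighborFinset_switch_w, h.neighborFinset_switch_x,
      restore h.adj_xy (fun e => h.not_adj_ux e.symm)]
  by_cases hw : a = w
  · subst hw; rw [h'.neighborFinset_switch_x, h.neighborFinset_switch_w,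
      restore h.adj_uw.symm h.not_adj_wy]
  by_cases hy : a = y
  · subst hy; rw [h'.neighborFinset_switch_y, h.neighborFinset_switch_y,
      restore h.adj_xy.symm (fun e => h.not_adj_wy e.symm)]
  ext c; simp [switch_adj_of_ne _ hu hx hw hy, switch_adj_of_ne _ hu hw hx hy]

end IsSwitchable
end SimpleGraph

namespace SimpleGraph

variable {V : Type*} [Fintype V] [DecidableEq V] (G : SimpleGraph V)

def degreeIn (s : Finset V) (u : V) : ℕ := #(G.neighborFinset u ∩ s)

lemma card_neighborFinset_sdiff_add_degreeIn (s : Finset V) (u : V) :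
    #(G.neighborFinset u \ s) + G.degreeIn s u = G.degree u := by
  rw [degreeIn, card_sdiff_add_card_inter, card_neighborFinset_eq_degree]

lemma IsSwitchable.degreeIn_switch {G : SimpleGraph V} {u w x y : V} {s : Finset V}
    (h : G.IsSwitchable u w x y) (hw : w ∉ s) (hx : x ∈ s) :
    (G.switch u w x y).degreeIn s u = G.degreeIn s u + 1 := by
  rw [degreeIn, degreeIn, h.neighborFinset_switch_u, insert_inter_of_mem hx, erase_inter,
    erase_eq_of_notMem (by simp [hw]), card_insert_of_notMem (by simp [h.not_adj_ux])]

/-- The triples `(w, x, y)` along which `G.switch u w x y` replaces the neighbour `w ∉ s` of `u`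
by `x ∈ s \ t`. -/
def switchings (s t : Finset V) (u : V) : Finset (Σ _ : V, Σ _ : V, V) :=
  (G.neighborFinset u \ s).sigma fun w =>
    ((s \ t) \ insert u (G.neighborFinset u)).sigma fun x =>
      {y ∈ G.neighborFinset x | ¬ G.Adj w y ∧ y ≠ u ∧ y ≠ w}

def reverseSwitchings (s : Finset V) (u : V) : Finset (V × Σ _ : V, V) :=
  (G.neighborFinset u ∩ s) ×ˢ univ.sigma fun v => G.neighborFinset v

lemma card_reverseSwitchings (s : Finset V) (u : V) :
    #(G.reverseSwitchings s u) = G.degreeIn s u * ∑ v, G.degree v := by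
  simp [reverseSwitchings, card_product, card_sigma, card_neighborFinset_eq_degree, degreeIn]

variable {G} in
lemma isSwitchable_of_mem_switchings {s t : Finset V} {u w x y : V}
    (h : ⟨w, x, y⟩ ∈ G.switchings s t u) : G.IsSwitchable u w x y ∧ w ∉ s ∧ x ∈ s := by
  simp only [switchings, mem_sigma, mem_sdiff, mem_insert, mem_neighborFinset, mem_filter,
    not_or] at h
  obtain ⟨⟨huw, hws⟩, ⟨⟨hxs, -⟩, hux, hnux⟩, hxy, hnwy, hyu, hyw⟩ := h
  exact ⟨⟨huw, hxy, hnux, hnwy, Ne.symm hux, Ne.symm hyu, fun h => hws (h ▸ hxs),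
    Ne.symm hyw⟩, hws, hxs⟩

lemma degree_le_card_add_card_inter_add_two (u w x : V) :
    G.degree x ≤ #{y ∈ G.neighborFinset x | ¬ G.Adj w y ∧ y ≠ u ∧ y ≠ w}
      + #(G.neighborFinset w ∩ G.neighborFinset x) + 2 := by
  have hsub : G.neighborFinset x ⊆ {y ∈ G.neighborFinset x | ¬ G.Adj w y ∧ y ≠ u ∧ y ≠ w}
      ∪ (G.neighborFinset w ∩ G.neighborFinset x) ∪ {u, w} := by
    intro y hy
    simp only [mem_union, mem_filter, mem_inter, mem_neighborFinset, mem_insert,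
      mem_singleton] at hy ⊢
    tauto
  rw [← card_neighborFinset_eq_degree]
  calc _ ≤ _ := card_le_card hsub
    _ ≤ _ := (card_union_le _ _).trans (add_le_add (card_union_le _ _) card_le_two)

/-- Counted through common neighbours `z`: a `z ∈ t` is shared with at most `deg z` vertices `x`,
any other `z` with at most `b`. -/
lemma sum_card_inter_neighborFinset_le (X t : Finset V) (w : V) {b : ℝ} (hb : 0 ≤ b)
    (hdeg : ∀ z ∉ t, (G.degree z : ℝ) ≤ b) :
    ∑ x ∈ X, (#(G.neighborFinset w ∩ G.neighborFinset x) : ℝ)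
      ≤ ∑ z ∈ t, (G.degree z : ℝ) + G.degree w * b := by
  have hswap : ∑ x ∈ X, #(G.neighborFinset w ∩ G.neighborFinset x)
      = ∑ z ∈ G.neighborFinset w, #{x ∈ X | G.Adj x z} := by
    refine (sum_congr rfl fun x _ => congrArg card ?_).trans
      (sum_card_bipartiteAbove_eq_sum_card_bipartiteBelow G.Adj)
    ext z; simp [bipartiteAbove, mem_neighborFinset]
  have hle : ∀ z, (#{x ∈ X | G.Adj x z} : ℝ) ≤ G.degree z := fun z => by
    rw [← card_neighborFinset_eq_degree]
    exact_mod_cast card_le_card fun x hx => by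
      simpa [mem_neighborFinset, G.adj_comm z] using (mem_filter.mp hx).2
  rw [← Nat.cast_sum, hswap, Nat.cast_sum, ← sum_filter_add_sum_filter_not _ (· ∈ t)]
  gcongr
  · calc _ ≤ ∑ z ∈ (G.neighborFinset w).filter (· ∈ t), (G.degree z : ℝ) :=
          sum_le_sum fun z _ => hle z
      _ ≤ _ := sum_le_sum_of_subset_of_nonneg (fun z hz => (mem_filter.mp hz).2)
          fun _ _ _ => by positivity
  · calc _ ≤ ∑ z ∈ (G.neighborFinset w).filter (· ∉ t), b :=
          sum_le_sum fun z hz => (hle z).trans (hdeg z (mem_filter.mp hz).2)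
      _ ≤ _ := by
        rw [sum_const, nsmul_eq_mul, ← card_neighborFinset_eq_degree]
        gcongr
        exact filter_subset _ _

lemma sum_sdiff_sdiff_insert_neighborFinset_ge (D : V → ℕ) (s t : Finset V) (u : V) {b : ℝ}
    (hb : 0 ≤ b) (hlt : ∀ v ∉ t, (D v : ℝ) ≤ b) :
    ∑ v ∈ s, (D v : ℝ) - ∑ v ∈ t, (D v : ℝ) - (G.degreeIn s u + 1) * b
      ≤ ∑ v ∈ (s \ t) \ insert u (G.neighborFinset u), (D v : ℝ) := by
  set N := insert u (G.neighborFinset u)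
  have hst : ∑ v ∈ s ∩ t, (D v : ℝ) ≤ ∑ v ∈ t, (D v : ℝ) :=
    sum_le_sum_of_subset_of_nonneg inter_subset_right fun _ _ _ => by positivity
  have hcard : #((s \ t) ∩ N) ≤ G.degreeIn s u + 1 := by
    refine (card_le_card ?_).trans (card_insert_le u (G.neighborFinset u ∩ s))
    intro v hv
    simp only [N, mem_inter, mem_sdiff, mem_insert] at hv ⊢
    tauto
  have hN : ∑ v ∈ (s \ t) ∩ N, (D v : ℝ) ≤ (G.degreeIn s u + 1) * b := by
    refine (sum_le_card_nsmul _ _ b fun v hv => ?_).trans ?_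
    · exact hlt v (mem_sdiff.mp (mem_inter.mp hv).1).2
    rw [nsmul_eq_mul]
    gcongr
    exact_mod_cast hcard
  rw [← sum_inter_add_sum_sdiff s t, ← sum_inter_add_sum_sdiff (s \ t) N]
  linarith

end SimpleGraph

section LowerBound

variable {V : Type*} [Fintype V]

def highDegreeSet (D : V → ℕ) (a : ℝ) : Finset V := univ.filter fun v => a ≤ (D v : ℝ)

lemma lt_of_notMem_highDegreeSet {D : V → ℕ} {a : ℝ} {v : V} (hv : v ∉ highDegreeSet D a) :
    (D v : ℝ) < a := by
  simpa [highDegreeSet] using hv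

/-- The hypotheses on the degree sequence `D`, with `M = εn`, `T = d̄n`, and with `a = (log n)²`
and `b = n^{4/5}` the thresholds of `S₁` and `S₃`. -/
structure DegreeMassBounds (D : V → ℕ) (a b M T : ℝ) : Prop where
  mass_pos : 0 < M
  threshold_nonneg : 0 ≤ b
  sum_le : ∑ v, (D v : ℝ) ≤ T
  le_sum_high : M ≤ ∑ v ∈ highDegreeSet D a, (D v : ℝ)
  sum_veryHigh_le : ∑ v ∈ highDegreeSet D b, (D v : ℝ) ≤ M / 10
  total_le : 200 * T ≤ M * a
  thresholds_le : a * b ≤ M / 100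

variable {D : V → ℕ} {a b M T : ℝ}

lemma DegreeMassBounds.mass_le (h : DegreeMassBounds D a b M T) : M ≤ T :=
  h.le_sum_high.trans (h.sum_le.trans' (sum_le_sum_of_subset_of_nonneg (subset_univ _)
    fun _ _ _ => by positivity))

lemma DegreeMassBounds.two_mul_card_le {X : Finset V} (h : DegreeMassBounds D a b M T)
    (hX : X ⊆ highDegreeSet D a) : 2 * (#X : ℝ) ≤ M / 100 := by
  have ha : 0 < a := pos_of_mul_pos_right
    (h.total_le.trans_lt' (by linarith [h.mass_le, h.mass_pos])) h.mass_pos.le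
  have hXa : (#X : ℝ) * a ≤ T := by
    calc (#X : ℝ) * a = ∑ _v ∈ X, a := by rw [sum_const, nsmul_eq_mul]
      _ ≤ ∑ v ∈ X, (D v : ℝ) := sum_le_sum fun v hv => by
          simpa [highDegreeSet] using hX hv
      _ ≤ ∑ v, (D v : ℝ) := sum_le_sum_of_subset_of_nonneg (subset_univ _)
          fun _ _ _ => by positivity
      _ ≤ T := h.sum_le
  nlinarith [h.total_le]

variable [DecidableEq V] {G : SimpleGraph V}

lemma SimpleGraph.degreeIn_highDegreeSet (G : SimpleGraph V) (u : V) :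
    G.degreeIn (highDegreeSet D a) u = #(univ.filter fun w => a ≤ (D w : ℝ) ∧ G.Adj u w) := by
  rw [degreeIn]
  congr 1
  ext w
  simp [highDegreeSet, and_comm]

lemma DegreeMassBounds.le_sum_card_switchings (h : DegreeMassBounds D a b M T)
    (hG : ∀ v, G.degree v = D v) (u : V) {w : V}
    (hw : w ∈ G.neighborFinset u \ highDegreeSet D a)
    (hjb : (G.degreeIn (highDegreeSet D a) u + 1) * b ≤ M / 100) :
    77 / 100 * M ≤ ∑ x ∈ (highDegreeSet D a \ highDegreeSet D b) \ insert u (G.neighborFinset u),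
      (#{y ∈ G.neighborFinset x | ¬ G.Adj w y ∧ y ≠ u ∧ y ≠ w} : ℝ) := by
  set s := highDegreeSet D a
  set t := highDegreeSet D b
  set X := (s \ t) \ insert u (G.neighborFinset u)
  have hlt : ∀ v ∉ t, (D v : ℝ) ≤ b := fun v hv => (lt_of_notMem_highDegreeSet hv).le
  have hXsum := G.sum_sdiff_sdiff_insert_neighborFinset_ge D s t u h.threshold_nonneg hlt
  have hX : 2 * (#X : ℝ) ≤ M / 100 :=
    h.two_mul_card_le fun v hv => (mem_sdiff.mp (mem_sdiff.mp hv).1).1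
  have hcod : ∑ x ∈ X, (#(G.neighborFinset w ∩ G.neighborFinset x) : ℝ) ≤ M / 10 + M / 100 := by
    refine (G.sum_card_inter_neighborFinset_le X t w h.threshold_nonneg
      fun z hz => hG z ▸ hlt z hz).trans ?_
    have hwa : (D w : ℝ) ≤ a := (lt_of_notMem_highDegreeSet (mem_sdiff.mp hw).2).le
    have : (D w : ℝ) * b ≤ a * b := mul_le_mul_of_nonneg_right hwa h.threshold_nonneg
    simp only [hG]
    linarith [h.sum_veryHigh_le, h.thresholds_le]
  have hY : ∀ x ∈ X, (D x : ℝ) - #(G.neighborFinset w ∩ G.neighborFinset x) - 2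
      ≤ #{y ∈ G.neighborFinset x | ¬ G.Adj w y ∧ y ≠ u ∧ y ≠ w} := fun x _ => by
    have := G.degree_le_card_add_card_inter_add_two u w x
    rw [hG] at this
    have := (Nat.cast_le (α := ℝ)).mpr this
    push_cast at this
    linarith
  refine le_trans ?_ (sum_le_sum hY)
  rw [sum_sub_distrib, sum_sub_distrib, sum_const, nsmul_eq_mul]
  linarith [h.le_sum_high, h.sum_veryHigh_le]

lemma DegreeMassBounds.le_card_switchings (h : DegreeMassBounds D a b M T)
    (hG : ∀ v, G.degree v = D v) (u : V) (hj : 2 * G.degreeIn (highDegreeSet D a) u ≤ D u)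
    (hjb : (G.degreeIn (highDegreeSet D a) u + 1) * b ≤ M / 100) :
    3 / 8 * (M * D u) ≤ #(G.switchings (highDegreeSet D a) (highDegreeSet D b) u) := by
  have hA : (D u : ℝ) ≤ 2 * #(G.neighborFinset u \ highDegreeSet D a) := by
    have := G.card_neighborFinset_sdiff_add_degreeIn (highDegreeSet D a) u
    rw [hG] at this
    exact_mod_cast (by omega : D u ≤ 2 * #(G.neighborFinset u \ highDegreeSet D a))
  have hrows := sum_le_sum fun w hw => h.le_sum_card_switchings hG u hw hjb
  rw [sum_const, nsmul_eq_mul] at hrows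
  simp only [SimpleGraph.switchings, card_sigma, Nat.cast_sum]
  nlinarith [h.mass_pos]

end LowerBound

section SwitchingCount

variable {n : ℕ} {D : Fin n → ℕ} {a b M T : ℝ}

/-- Distinct forward switchings give distinct pairs `(G', (x, w, y))`, since switching back
along `(u, x, w, y)` recovers `G`. -/
lemma card_sigma_switchings_le (s t : Finset (Fin n)) (u : Fin n) (j : ℕ) :
    #(((graphsWithDegreeSeq n D).filter (·.degreeIn s u = j)).sigma
        fun G => G.switchings s t u)
      ≤ #(((graphsWithDegreeSeq n D).filter (·.degreeIn s u = j + 1)).sigma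
        fun G => G.reverseSwitchings s u) := by
  refine card_le_card_of_injOn
    (fun p => ⟨p.1.switch u p.2.1 p.2.2.1 p.2.2.2, (p.2.2.1, ⟨p.2.1, p.2.2.2⟩)⟩) ?_ ?_
  · rintro ⟨G, w, x, y⟩ hp
    rw [mem_coe, mem_sigma, mem_filter, graphsWithDegreeSeq, mem_filter] at hp
    obtain ⟨⟨⟨-, hD⟩, rfl⟩, hsw⟩ := hp
    obtain ⟨h, hws, hxs⟩ := SimpleGraph.isSwitchable_of_mem_switchings hsw
    simp only [mem_coe, mem_sigma, mem_filter, graphsWithDegreeSeq, mem_product, mem_inter,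
      SimpleGraph.reverseSwitchings, mem_univ, true_and, SimpleGraph.mem_neighborFinset]
    exact ⟨⟨fun v => (h.degree_switch v).trans (hD v), h.degreeIn_switch hws hxs⟩,
      ⟨h.switch.adj_uw, hxs⟩, h.switch.adj_xy⟩
  · rintro ⟨G₁, w, x, y⟩ hp₁ ⟨G₂, w₂, x₂, y₂⟩ hp₂ heq
    simp only [Sigma.mk.inj_iff, Prod.mk.injEq, heq_eq_eq] at heq
    obtain ⟨hG, rfl, rfl, rfl⟩ := heq
    have h₁ : G₁.IsSwitchable u w x y :=
      (SimpleGraph.isSwitchable_of_mem_switchings (mem_sigma.mp hp₁).2).1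
    have h₂ : G₂.IsSwitchable u w x y :=
      (SimpleGraph.isSwitchable_of_mem_switchings (mem_sigma.mp hp₂).2).1
    rw [← h₁.switch_switch, hG, h₂.switch_switch]

lemma DegreeMassBounds.two_mul_card_filter_degreeIn_le (h : DegreeMassBounds D a b M T)
    (u : Fin n) {j : ℕ} (hjT : (j + 1) * T ≤ M * D u / 8) (hjb : (j + 1) * b ≤ M / 100) :
    2 * #((graphsWithDegreeSeq n D).filter (·.degreeIn (highDegreeSet D a) u = j))
      ≤ #((graphsWithDegreeSeq n D).filter (·.degreeIn (highDegreeSet D a) u = j + 1)) := by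
  set B := fun i => (graphsWithDegreeSeq n D).filter (·.degreeIn (highDegreeSet D a) u = i)
  have hM := h.mass_pos
  have hDu : 8 * ((j : ℝ) + 1) ≤ D u := by nlinarith [h.mass_le]
  have hfwd : (#(B j) : ℝ) * (3 / 8 * (M * D u))
      ≤ #((B j).sigma fun G => G.switchings (highDegreeSet D a) (highDegreeSet D b) u) := by
    rw [card_sigma, Nat.cast_sum, ← nsmul_eq_mul, ← sum_const]
    refine sum_le_sum fun G hG => ?_
    obtain ⟨hG, hGj⟩ := mem_filter.mp hG
    rw [graphsWithDegreeSeq, mem_filter] at hG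
    refine h.le_card_switchings hG.2 u ?_ (by rw [hGj]; exact hjb)
    rw [hGj]
    exact_mod_cast (by linarith : 2 * (j : ℝ) ≤ D u)
  have hbwd : (#((B (j + 1)).sigma fun G => G.reverseSwitchings (highDegreeSet D a) u) : ℝ)
      ≤ #(B (j + 1)) * (M * D u / 8) := by
    rw [card_sigma, Nat.cast_sum, ← nsmul_eq_mul, ← sum_const]
    refine sum_le_sum fun G hG => ?_
    obtain ⟨hG, hGj⟩ := mem_filter.mp hG
    rw [graphsWithDegreeSeq, mem_filter] at hG
    simp only [SimpleGraph.card_reverseSwitchings, hGj, hG.2]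
    push_cast
    exact (mul_le_mul_of_nonneg_left h.sum_le (by positivity)).trans hjT
  have hinj := card_sigma_switchings_le (D := D) (highDegreeSet D a) (highDegreeSet D b) u j
  have : (3 * #(B j) : ℝ) ≤ #(B (j + 1)) := by
    have hpos : 0 < M * D u := mul_pos hM (by linarith)
    nlinarith [(Nat.cast_le (α := ℝ)).mpr hinj]
  exact_mod_cast (by linarith : (2 * #(B j) : ℝ) ≤ #(B (j + 1)))

end SwitchingCount

lemma two_pow_mul_sum_range_le_of_two_mul_le {f : ℕ → ℕ} {m L : ℕ}
    (hf : ∀ j < m + L, 2 * f j ≤ f (j + 1)) :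
    2 ^ L * ∑ j ∈ range (m + 1), f j ≤ 2 * f (m + L) := by
  have hsum : ∀ k ≤ m, ∑ j ∈ range (k + 1), f j ≤ 2 * f k := by
    intro k hk
    induction k with
    | zero => simp only [zero_add, range_one, sum_singleton]; omega
    | succ k ih =>
      rw [sum_range_succ]
      linarith [ih (by omega), hf k (by omega)]
  have hpow : ∀ i ≤ L, 2 ^ i * f m ≤ f (m + i) := by
    intro i hi
    induction i with
    | zero => simp
    | succ i ih =>
      rw [pow_succ, mul_comm _ 2, mul_assoc, ← add_assoc]
      linarith [ih (by omega), hf (m + i) (by omega)]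
  calc 2 ^ L * ∑ j ∈ range (m + 1), f j ≤ 2 ^ L * (2 * f m) := by
        gcongr; exact hsum m le_rfl
    _ = 2 * (2 ^ L * f m) := by ring
    _ ≤ 2 * f (m + L) := by gcongr; exact hpow L le_rfl

section Probability

variable {n : ℕ} {D : Fin n → ℕ}

lemma uniformProb_eq_card_filter_div (A : SimpleGraph (Fin n) → Prop) [DecidablePred A] :
    uniformProb n D A = #((graphsWithDegreeSeq n D).filter A) / #(graphsWithDegreeSeq n D) := by
  rw [uniformProb, filter_congr_decidable]

lemma uniformProb_mono {A B : SimpleGraph (Fin n) → Prop} (h : ∀ G, A G → B G) :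
    uniformProb n D A ≤ uniformProb n D B :=
  div_le_div_of_nonneg_right
    (by exact_mod_cast card_le_card (monotone_filter_right _ fun G _ => h G)) (by positivity)

lemma uniformProb_exists_le (s : Finset (Fin n)) (P : Fin n → SimpleGraph (Fin n) → Prop)
    {p : ℝ} (hp : ∀ u ∈ s, uniformProb n D (P u) ≤ p) :
    uniformProb n D (fun G => ∃ u ∈ s, P u G) ≤ #s * p := by
  calc uniformProb n D _ ≤ ∑ u ∈ s, uniformProb n D (P u) := by
        simp only [uniformProb_eq_card_filter_div]
        rw [← sum_div]
        gcongr
        norm_cast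
        refine (card_le_card fun G hG => ?_).trans card_biUnion_le
        obtain ⟨hG, u, hu, hP⟩ := mem_filter.mp hG
        exact mem_biUnion.mpr ⟨u, hu, mem_filter.mpr ⟨hG, hP⟩⟩
    _ ≤ #s * p := by simpa using sum_le_card_nsmul s _ p hp

variable {a b M T : ℝ}

lemma DegreeMassBounds.uniformProb_degreeIn_le_le (h : DegreeMassBounds D a b M T) (u : Fin n)
    {m L : ℕ} (hT : ((m : ℝ) + L) * T ≤ M * D u / 8) (hb : ((m : ℝ) + L) * b ≤ M / 100) :
    uniformProb n D (fun G => G.degreeIn (highDegreeSet D a) u ≤ m) ≤ 2 / 2 ^ L := by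
  set Ω := graphsWithDegreeSeq n D
  set f := fun j => #(Ω.filter (·.degreeIn (highDegreeSet D a) u = j))
  have hf : ∀ j < m + L, 2 * f j ≤ f (j + 1) := fun j hj => by
    have hj : (j : ℝ) + 1 ≤ m + L := by exact_mod_cast hj
    exact h.two_mul_card_filter_degreeIn_le u
      (hT.trans' (by gcongr; linarith [h.mass_le, h.mass_pos]))
      (hb.trans' (by gcongr; exact h.threshold_nonneg))
  have hcard :
      #(Ω.filter (·.degreeIn (highDegreeSet D a) u ≤ m)) ≤ ∑ j ∈ range (m + 1), f j := by
    refine (card_le_card fun G hG => ?_).trans card_biUnion_le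
    obtain ⟨hG, hm⟩ := mem_filter.mp hG
    exact mem_biUnion.mpr ⟨_, mem_range.mpr (Nat.lt_succ_of_le hm), mem_filter.mpr ⟨hG, rfl⟩⟩
  have hbound : 2 ^ L * #(Ω.filter (·.degreeIn (highDegreeSet D a) u ≤ m)) ≤ 2 * #Ω :=
    calc _ ≤ 2 ^ L * ∑ j ∈ range (m + 1), f j := by gcongr
      _ ≤ 2 * f (m + L) := two_pow_mul_sum_range_le_of_two_mul_le hf
      _ ≤ 2 * #Ω := by gcongr; exact card_filter_le _ _
  rw [uniformProb_eq_card_filter_div]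
  refine div_le_of_le_mul₀ (by positivity) (by positivity) ?_
  rw [div_mul_eq_mul_div, le_div_iff₀ (by positivity)]
  have := (Nat.cast_le (α := ℝ)).mpr hbound
  push_cast at this
  linarith

lemma DegreeMassBounds.uniformProb_degreeIn_le_floor_le {ε dbar N r : ℝ} {L : ℕ}
    (h : DegreeMassBounds D a b (ε * N) (dbar * N)) (hdbar : 1 ≤ dbar) (hε : 0 < ε)
    (hε₁ : ε ≤ 1) (hLa : 16 * dbar * L ≤ ε * a) (hLr : L ≤ r) (hr : 2 * r * b ≤ ε * N / 100)
    {u : Fin n} (hu : u ∈ highDegreeSet D a) :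
    uniformProb n D
        (fun G => G.degreeIn (highDegreeSet D a) u ≤ ⌊min (D u : ℝ) r * ε / (16 * dbar)⌋₊)
      ≤ 2 / 2 ^ L := by
  set k := ⌊min (D u : ℝ) r * ε / (16 * dbar)⌋₊
  have hr0 : 0 ≤ r := hLr.trans' L.cast_nonneg
  have hN : 0 < N := pos_of_mul_pos_right h.mass_pos hε.le
  have hua : a ≤ D u := (mem_filter.mp hu).2
  have hk : (k : ℝ) * (16 * dbar) ≤ min (D u : ℝ) r * ε :=
    (le_div_iff₀ (by positivity)).mp (Nat.floor_le (by positivity))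
  have hkDu : 16 * dbar * k ≤ ε * D u := by nlinarith [min_le_left (D u : ℝ) r]
  have hkr : (k : ℝ) ≤ r := by nlinarith [min_le_right (D u : ℝ) r]
  have hkL : dbar * (k + L) ≤ ε * D u / 8 := by nlinarith
  refine h.uniformProb_degreeIn_le_le u ?_ ?_
  · calc ((k : ℝ) + L) * (dbar * N) = dbar * (k + L) * N := by ring
      _ ≤ ε * D u / 8 * N := by gcongr
      _ = ε * N * D u / 8 := by ring
  · calc ((k : ℝ) + L) * b ≤ 2 * r * b := by gcongr; exact h.threshold_nonneg; linarith
      _ ≤ ε * N / 100 := hr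

end Probability

section Asymptotics

open Filter Real

lemma eventually_rpow_le_mul {p c : ℝ} (hp : p < 1) (hc : 0 < c) :
    ∀ᶠ x : ℝ in atTop, x ^ p ≤ c * x := by
  filter_upwards [eventually_gt_atTop 0,
    (tendsto_rpow_atTop (sub_pos.mpr hp)).eventually_ge_atTop c⁻¹] with x hx hle
  calc x ^ p = c * (c⁻¹ * x ^ p) := by field_simp
    _ ≤ c * (x ^ (1 - p) * x ^ p) := by gcongr
    _ = c * x := by rw [← rpow_add hx, sub_add_cancel, rpow_one]

lemma eventually_log_sq_le_mul_rpow {s c : ℝ} (hs : 0 < s) (hc : 0 < c) :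
    ∀ᶠ x : ℝ in atTop, log x ^ 2 ≤ c * x ^ s := by
  filter_upwards [(isLittleO_log_rpow_rpow_atTop 2 hs).bound hc, eventually_gt_atTop 0]
    with x hx hx0
  rwa [rpow_two, norm_of_nonneg (by positivity), norm_of_nonneg (by positivity)] at hx

lemma ceil_logb_le_two_mul_logb {x δ : ℝ} (hδ : 0 < δ) (hx : 4 / δ ≤ x) (hxδ : δ / 2 ≤ x) :
    (⌈logb 2 (2 * x / δ)⌉₊ : ℝ) ≤ 2 * logb 2 x := by
  have hx0 : 0 < x := (div_pos four_pos hδ).trans_le hx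
  have h1 : 1 ≤ 2 * x / δ := by rw [le_div_iff₀ hδ]; linarith
  calc (⌈logb 2 (2 * x / δ)⌉₊ : ℝ) ≤ logb 2 (2 * x / δ) + logb 2 2 := by
        rw [logb_self_eq_one one_lt_two]
        exact (Nat.ceil_lt_add_one (logb_nonneg one_lt_two h1)).le
    _ = logb 2 (4 / δ * x) := by
        rw [← logb_mul (div_pos (mul_pos two_pos hx0) hδ).ne' two_ne_zero]; ring_nf
    _ ≤ logb 2 (x ^ 2) := logb_le_logb_of_le one_lt_two (by positivity) (by nlinarith)
    _ = 2 * logb 2 x := by rw [logb_pow]; norm_num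

lemma eventually_log_sq_mul_rpow_le {c : ℝ} (hc : 0 < c) :
    ∀ᶠ x : ℝ in atTop, log x ^ 2 * x ^ (4 / 5 : ℝ) ≤ c * x := by
  filter_upwards [eventually_log_sq_le_mul_rpow (by norm_num : (0 : ℝ) < 1 / 5) hc,
    eventually_gt_atTop 0] with x hx hx0
  calc log x ^ 2 * x ^ (4 / 5 : ℝ) ≤ c * x ^ (1 / 5 : ℝ) * x ^ (4 / 5 : ℝ) := by gcongr
    _ = c * x := by rw [mul_assoc, ← rpow_add hx0]; norm_num

lemma eventually_two_mul_rpow_mul_rpow_le {c : ℝ} (hc : 0 < c) :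
    ∀ᶠ x : ℝ in atTop, 2 * x ^ (1 / 6 : ℝ) * x ^ (4 / 5 : ℝ) ≤ c * x := by
  filter_upwards [eventually_rpow_le_mul (by norm_num : (29 / 30 : ℝ) < 1) (half_pos hc),
    eventually_gt_atTop 0] with x hx hx0
  rw [mul_assoc, ← rpow_add hx0]
  norm_num at hx ⊢
  linarith

lemma eventually_parameter_bounds {dbar ε δ : ℝ} (hdbar : 0 < dbar) (hε : 0 < ε) (hδ : 0 < δ) :
    ∀ᶠ x : ℝ in atTop, 0 < x ∧ 200 * dbar ≤ ε * log x ^ 2 ∧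
      log x ^ 2 * x ^ (4 / 5 : ℝ) ≤ ε * x / 100 ∧
      2 * x ^ (1 / 6 : ℝ) * x ^ (4 / 5 : ℝ) ≤ ε * x / 100 ∧
      16 * dbar * ⌈logb 2 (2 * x / δ)⌉₊ ≤ ε * log x ^ 2 ∧
      (⌈logb 2 (2 * x / δ)⌉₊ : ℝ) ≤ x ^ (1 / 6 : ℝ) := by
  have hlog2 : 0 < log 2 := log_pos one_lt_two
  filter_upwards [eventually_ge_atTop (4 / δ), eventually_ge_atTop (δ / 2),
    tendsto_log_atTop.eventually_ge_atTop
      (max 1 (max (200 * dbar / ε) (32 * dbar / (ε * log 2)))),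
    eventually_log_sq_mul_rpow_le (div_pos hε (by norm_num : (0 : ℝ) < 100)),
    eventually_two_mul_rpow_mul_rpow_le (div_pos hε (by norm_num : (0 : ℝ) < 100)),
    (isLittleO_log_rpow_atTop (by norm_num : (0 : ℝ) < 1 / 6)).bound (half_pos hlog2)]
    with x hxδ hxδ' hlog hsq hpow hlogo
  have hx0 : 0 < x := (div_pos four_pos hδ).trans_le hxδ
  have hceil := ceil_logb_le_two_mul_logb hδ hxδ hxδ'
  rw [show 2 * logb 2 x = 2 * log x / log 2 by rw [logb, mul_div_assoc]] at hceil
  rw [le_div_iff₀ hlog2] at hceil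
  simp only [max_le_iff, div_le_iff₀ hε, div_le_iff₀ (mul_pos hε hlog2)] at hlog
  rw [norm_of_nonneg (by linarith), norm_of_nonneg (by positivity)] at hlogo
  refine ⟨hx0, by nlinarith, by linarith, by linarith, ?_, ?_⟩
  · nlinarith
  · nlinarith

end Asymptotics

/-- **Lemma (large minimum degree inside `S₁`).**
If `S₁ = {u : d(u) ≥ (log n)²}` carries total degree at least `εn` while
`S₃ = {u : d(u) ≥ n^{4/5}}` carries total degree less than `εn/10`, then with probability
at least `1-δ` every `u ∈ S₁` has more than `min{d(u), n^{1/6}}·ε/(16d̄)` neighbours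
inside `S₁`. -/
theorem min_degree_in_S1_large :
    ∀ dbar : ℝ, 1 ≤ dbar →
    ∃ ε₀ : ℝ, 0 < ε₀ ∧ ε₀ < 1 ∧
    ∀ ε : ℝ, 0 < ε → ε ≤ ε₀ → ∀ δ : ℝ, 0 < δ → δ < 1 →
    ∃ n₀ : ℕ, ∀ n : ℕ, n₀ ≤ n →
    ∀ D : Fin n → ℕ, (∀ w, 1 ≤ D w) →
    (graphsWithDegreeSeq n D).Nonempty →
    (∑ i, (D i : ℝ)) ≤ dbar * n →
    ε * n ≤ (∑ u ∈ Finset.univ.filter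
        (fun u : Fin n => (Real.log n) ^ 2 ≤ (D u : ℝ)), (D u : ℝ)) →
    (∑ u ∈ Finset.univ.filter
        (fun u : Fin n => (n : ℝ) ^ ((4 : ℝ) / 5) ≤ (D u : ℝ)), (D u : ℝ)) < ε * n / 10 →
    uniformProb n D (fun G => ∃ u : Fin n,
        (Real.log n) ^ 2 ≤ (D u : ℝ) ∧
        (((Finset.univ.filter (fun w : Fin n =>
            (Real.log n) ^ 2 ≤ (D w : ℝ) ∧ G.Adj u w)).card : ℝ)
          ≤ min (D u : ℝ) ((n : ℝ) ^ ((1 : ℝ) / 6)) * ε / (16 * dbar)))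
      ≤ δ := by
  intro dbar hdbar
  refine ⟨1 / 2, by norm_num, by norm_num, fun ε hε hε₀ δ hδ _ => ?_⟩
  obtain ⟨n₀, hn₀⟩ := Filter.eventually_atTop.mp <| tendsto_natCast_atTop_atTop.eventually <|
    eventually_parameter_bounds (by linarith : 0 < dbar) hε hδ
  refine ⟨n₀, fun n hn D _ _ hsum hS₁ hS₃ => ?_⟩
  obtain ⟨hn, hlog, hsq, hpow, hLlog, hLpow⟩ := hn₀ n hn
  set s := highDegreeSet D (Real.log n ^ 2)
  set L := ⌈Real.logb 2 (2 * n / δ)⌉₊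
  have h : DegreeMassBounds D (Real.log n ^ 2) ((n : ℝ) ^ ((4 : ℝ) / 5)) (ε * n) (dbar * n) :=
    ⟨by positivity, by positivity, hsum, hS₁, hS₃.le, by nlinarith, by linarith⟩
  have hL : 2 * n / δ ≤ 2 ^ L := by
    rw [← Real.rpow_natCast, ← Real.logb_le_iff_le_rpow one_lt_two (by positivity)]
    exact Nat.le_ceil _
  calc uniformProb n D _ ≤ uniformProb n D (fun G => ∃ u ∈ s, G.degreeIn s u
        ≤ ⌊min (D u : ℝ) ((n : ℝ) ^ ((1 : ℝ) / 6)) * ε / (16 * dbar)⌋₊) := by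
        refine uniformProb_mono fun G ⟨u, hu, hdeg⟩ => ⟨u, mem_filter.mpr ⟨mem_univ u, hu⟩, ?_⟩
        rw [SimpleGraph.degreeIn_highDegreeSet]
        exact Nat.le_floor hdeg
    _ ≤ #s * (2 / 2 ^ L) := uniformProb_exists_le s _ fun u hu =>
        h.uniformProb_degreeIn_le_floor_le hdbar hε (by linarith) hLlog hLpow hpow hu
    _ ≤ n * (2 / 2 ^ L) := by
        gcongr; exact_mod_cast card_le_univ s |>.trans_eq (Fintype.card_fin n)
    _ ≤ δ := by
        rw [mul_div_assoc', div_le_iff₀ (by positivity)]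
        rw [div_le_iff₀ hδ] at hL
        linarith
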